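/- Let μ be the Gauss–Kuzmin measure on (0,1) and T the Gauss map. Define Δ(t) := ∫₀¹ (e^{−it⌊1/T(x)⌋} − 1)(e^{it⌊1/x⌋} − 1) dμ(x). Then there is a constant C with |Δ(t)| ≤ C (t log t)² for all t ∈ (0, 1/2). -/

import Mathlib

open MeasureTheory

noncomputable def gaussMeasure : Measure ℝ :=
  (volume.restrict (Set.Ioo (0:ℝ) 1)).withDensity
    (fun x => ENNReal.ofReal (1 / ((1 + x) * Real.log 2)))

noncomputable def gaussMap (x : ℝ) : ℝ := Int.fract (1 / x)

/-
Bound `Δ(t)` by the integral of the modulus of its integrand. On the cylinder where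
`⌊1/x⌋ = n` and `⌊1/T x⌋ = m` that modulus is at most `min 2 (t m) * min 2 (t n)`, and the
cylinder is an interval of length at most `1 / (n m)²`; the Gauss density is at most `2`. Hence
`|Δ(t)| ≤ 2 (∑ₖ min 2 (t k) / k²)²`, and splitting the sum at `k ≈ 1/t` (harmonic sum below,
`∑ 1/k²` tail above) bounds it by `t (5 + log (1/t))`.
-/

open Set Complex
open scoped ENNReal

lemma norm_exp_I_mul_ofReal_sub_one_le_min (θ : ℝ) : ‖exp (I * θ) - 1‖ ≤ min 2 |θ| := by
  refine le_min ?_ Real.norm_exp_I_mul_ofReal_sub_one_le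
  calc ‖exp (I * θ) - 1‖ ≤ ‖exp (θ * I)‖ + ‖(1 : ℂ)‖ := by rw [mul_comm]; exact norm_sub_le _ _
    _ = 2 := by rw [norm_exp_ofReal_mul_I]; norm_num

lemma gaussMeasure_le_two_smul : gaussMeasure ≤ (2 : ℝ≥0∞) • volume.restrict (Ioo 0 1) := by
  rw [gaussMeasure, ← withDensity_const]
  refine withDensity_mono ?_
  filter_upwards [ae_restrict_mem measurableSet_Ioo] with x hx
  have hlog2 := Real.log_two_gt_d9
  have h : 1 / ((1 + x) * Real.log 2) ≤ 2 := by
    rw [div_le_iff₀ (by nlinarith [hx.1])]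
    nlinarith [hx.1]
  simpa using ENNReal.ofReal_le_ofReal h

def gaussCylinder (n m : ℕ) : Set ℝ := {x | ⌊1 / x⌋ = n ∧ ⌊1 / gaussMap x⌋ = m}

lemma mem_gaussCylinder_floor {x : ℝ} (hx : 0 ≤ x) :
    x ∈ gaussCylinder ⌊1 / x⌋₊ ⌊1 / gaussMap x⌋₊ :=
  ⟨(Int.natCast_floor_eq_floor (by positivity)).symm,
    (Int.natCast_floor_eq_floor (one_div_nonneg.2 (Int.fract_nonneg _))).symm⟩

lemma gaussCylinder_subset_Ico {n m : ℕ} (hm : m ≠ 0) :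
    gaussCylinder n m ⊆ Ico (1 / (n + 1 / m)) (1 / (n + 1 / (m + 1))) := by
  rintro x ⟨hxn, hxm⟩
  have hm1 : (1 : ℝ) ≤ m := by exact_mod_cast Nat.one_le_iff_ne_zero.2 hm
  have hT : gaussMap x = 1 / x - n := by rw [gaussMap, ← Int.self_sub_floor, hxn]; simp
  rw [Int.floor_eq_iff] at hxm
  push_cast at hxm
  have hT0 : 0 < gaussMap x := one_div_pos.1 (by linarith)
  have hTle : gaussMap x ≤ 1 / m := by
    rw [le_one_div hT0 (by positivity)]; exact hxm.1
  have hTgt : 1 / (m + 1) < gaussMap x := (one_div_lt (by positivity) hT0).2 hxm.2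
  have hx0 : 0 < 1 / x := by linarith
  rw [← one_div_one_div x]
  exact ⟨one_div_le_one_div_of_le hx0 (by linarith),
    one_div_lt_one_div_of_lt (by positivity) (by linarith)⟩

lemma volume_gaussCylinder_le {n m : ℕ} (hn : n ≠ 0) (hm : m ≠ 0) :
    volume (gaussCylinder n m) ≤ ENNReal.ofReal (1 / (n * m) ^ 2) := by
  refine (measure_mono (gaussCylinder_subset_Ico hm)).trans ?_
  rw [Real.volume_Ico]
  refine ENNReal.ofReal_le_ofReal ?_
  have hn0 : (0 : ℝ) < n := by positivity
  have hm0 : (0 : ℝ) < m := by positivity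
  have : 1 / (n + 1 / (m + 1 : ℝ)) - 1 / (n + 1 / m) = 1 / ((n * m + 1) * (n * m + n + 1)) := by
    field_simp
    ring
  rw [this]
  exact one_div_le_one_div_of_le (by positivity) (by nlinarith [mul_pos hn0 hm0])

lemma setLIntegral_Ioo_le_sq_tsum_of_gaussCylinder {f : ℝ → ℝ≥0∞} {w : ℕ → ℝ≥0∞}
    (h : ∀ n m, ∫⁻ x in gaussCylinder n m, f x ≤ w n * w m) :
    ∫⁻ x in Ioo 0 1, f x ≤ (∑' n, w n) ^ 2 :=
  calc ∫⁻ x in Ioo 0 1, f x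
      ≤ ∫⁻ x in ⋃ p : ℕ × ℕ, gaussCylinder p.1 p.2, f x :=
        lintegral_mono_set fun x hx ↦
          mem_iUnion.2 ⟨(⌊1 / x⌋₊, ⌊1 / gaussMap x⌋₊), mem_gaussCylinder_floor hx.1.le⟩
    _ ≤ ∑' p : ℕ × ℕ, ∫⁻ x in gaussCylinder p.1 p.2, f x := lintegral_iUnion_le _ _
    _ ≤ ∑' p : ℕ × ℕ, w p.1 * w p.2 := ENNReal.tsum_le_tsum fun p ↦ h p.1 p.2
    _ = (∑' n, w n) ^ 2 := by
        rw [ENNReal.tsum_prod', sq, ← ENNReal.tsum_mul_right]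
        simp only [ENNReal.tsum_mul_left]

/-- `min 2 (t * k)` bounds `‖exp (i t k) - 1‖` and `gaussCylinder n m` has length at most
`1 / (n * m) ^ 2`, so the integral over it is at most `digitWeight t n * digitWeight t m`. -/
noncomputable def digitWeight (t : ℝ) (k : ℕ) : ℝ := min 2 (t * k) / k ^ 2

lemma digitWeight_nonneg {t : ℝ} (ht : 0 ≤ t) (k : ℕ) : 0 ≤ digitWeight t k :=
  div_nonneg (le_min zero_le_two (by positivity)) (by positivity)

lemma digitWeight_le_div (t : ℝ) (k : ℕ) : digitWeight t k ≤ t / k := by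
  rcases eq_or_ne k 0 with rfl | hk
  · simp [digitWeight]
  calc digitWeight t k ≤ t * k / k ^ 2 := by
        unfold digitWeight; gcongr; exact min_le_right _ _
    _ = t / k := by field_simp

lemma digitWeight_le_two_mul_inv_sq (t : ℝ) (k : ℕ) : digitWeight t k ≤ 2 * (k ^ 2 : ℝ)⁻¹ := by
  rw [digitWeight, div_eq_mul_inv]
  gcongr
  exact min_le_left _ _

lemma sum_range_digitWeight_le {t : ℝ} (ht0 : 0 < t) (ht1 : t ≤ 1) (M : ℕ) :
    ∑ k ∈ Finset.range M, digitWeight t k ≤ t * (5 + Real.log t⁻¹) := by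
  set N := ⌊t⁻¹⌋₊
  have hN : 0 < N := Nat.floor_pos.2 (one_le_inv₀ ht0 |>.2 ht1)
  have hhead : ∑ k ∈ (Finset.range M).filter (· ≤ N), digitWeight t k ≤ t * (1 + Real.log t⁻¹) :=
    calc ∑ k ∈ (Finset.range M).filter (· ≤ N), digitWeight t k
        ≤ ∑ k ∈ Finset.range (N + 1), t / k := by
          refine (Finset.sum_le_sum fun k _ ↦ digitWeight_le_div t k).trans ?_
          refine Finset.sum_le_sum_of_subset_of_nonneg (fun k hk ↦ ?_) fun k _ _ ↦ by positivity
          simp only [Finset.mem_filter] at hk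
          exact Finset.mem_range_succ_iff.2 hk.2
      _ = t * harmonic N := by
          simp only [harmonic, Finset.sum_range_succ', div_eq_mul_inv]
          push_cast
          simp [Finset.mul_sum]
      _ ≤ t * (1 + Real.log t⁻¹) := by
          grw [harmonic_le_one_add_log, Nat.floor_le (by positivity)]
  have htail : ∑ k ∈ (Finset.range M).filter (¬ · ≤ N), digitWeight t k ≤ 4 * t :=
    calc ∑ k ∈ (Finset.range M).filter (¬ · ≤ N), digitWeight t k
        ≤ ∑ k ∈ Finset.Ioo N M, 2 * (k ^ 2 : ℝ)⁻¹ := by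
          refine (Finset.sum_le_sum fun k _ ↦ digitWeight_le_two_mul_inv_sq t k).trans ?_
          refine Finset.sum_le_sum_of_subset_of_nonneg (fun k hk ↦ ?_) fun k _ _ ↦ by positivity
          simp only [Finset.mem_filter, Finset.mem_range, not_le] at hk
          exact Finset.mem_Ioo.2 ⟨hk.2, hk.1⟩
      _ ≤ 2 * (2 / (N + 1)) := by rw [← Finset.mul_sum]; gcongr; exact sum_Ioo_inv_sq_le N M
      _ ≤ 4 * t := by
          have : t⁻¹ < N + 1 := Nat.lt_floor_add_one _
          rw [inv_lt_iff_one_lt_mul₀ ht0] at this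
          have : 2 / (N + 1 : ℝ) < 2 * t := by rw [div_lt_iff₀ (by positivity)]; linarith
          linarith
  rw [← Finset.sum_filter_add_sum_filter_not _ (· ≤ N)]
  linarith

lemma tsum_ofReal_digitWeight_le {t : ℝ} (ht0 : 0 < t) (ht1 : t ≤ 1) :
    ∑' k, ENNReal.ofReal (digitWeight t k) ≤ ENNReal.ofReal (t * (5 + Real.log t⁻¹)) :=
  ENNReal.tsum_le_of_sum_range_le fun M ↦ by
    rw [← ENNReal.ofReal_sum_of_nonneg fun k _ ↦ digitWeight_nonneg ht0.le k]
    exact ENNReal.ofReal_le_ofReal (sum_range_digitWeight_le ht0 ht1 M)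

noncomputable def deltaIntegrand (t x : ℝ) : ℂ :=
  (exp (-(I * (t : ℂ) * (⌊1 / gaussMap x⌋ : ℂ))) - 1) * (exp (I * (t : ℂ) * (⌊1 / x⌋ : ℂ)) - 1)

lemma norm_deltaIntegrand_le {t x : ℝ} {n m : ℕ} (ht : 0 ≤ t) (hx : x ∈ gaussCylinder n m) :
    ‖deltaIntegrand t x‖ ≤ min 2 (t * m) * min 2 (t * n) := by
  obtain ⟨hxn, hxm⟩ := hx
  have hm : -(I * t * (m : ℤ)) = I * ((-(t * m) : ℝ) : ℂ) := by push_cast; ring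
  have hn : I * t * (n : ℤ) = I * ((t * n : ℝ) : ℂ) := by push_cast; ring
  have hmn : |-(t * m)| = t * m := by rw [abs_neg, abs_of_nonneg (by positivity)]
  rw [deltaIntegrand, hxn, hxm, hm, hn, norm_mul]
  refine mul_le_mul ?_ ?_ (norm_nonneg _) (le_min zero_le_two (by positivity))
  · simpa only [hmn] using norm_exp_I_mul_ofReal_sub_one_le_min (-(t * m))
  · simpa only [abs_of_nonneg (by positivity : 0 ≤ t * n)] using
      norm_exp_I_mul_ofReal_sub_one_le_min (t * n)

lemma setLIntegral_gaussCylinder_enorm_deltaIntegrand_le {t : ℝ} (ht : 0 ≤ t) (n m : ℕ) :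
    ∫⁻ x in gaussCylinder n m, ‖deltaIntegrand t x‖ₑ ≤
      ENNReal.ofReal (digitWeight t n) * ENNReal.ofReal (digitWeight t m) := by
  set c := min 2 (t * m) * min 2 (t * n)
  calc ∫⁻ x in gaussCylinder n m, ‖deltaIntegrand t x‖ₑ
      ≤ ∫⁻ _ in gaussCylinder n m, ENNReal.ofReal c :=
        setLIntegral_mono measurable_const fun x hx ↦ by
          rw [← ofReal_norm]; exact ENNReal.ofReal_le_ofReal (norm_deltaIntegrand_le ht hx)
    _ = ENNReal.ofReal c * volume (gaussCylinder n m) := setLIntegral_const _ _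
    _ ≤ ENNReal.ofReal (digitWeight t n) * ENNReal.ofReal (digitWeight t m) := by
      rcases eq_or_ne n 0 with rfl | hn
      · simp [c]
      rcases eq_or_ne m 0 with rfl | hm
      · simp [c]
      grw [volume_gaussCylinder_le hn hm, ← ENNReal.ofReal_mul (by positivity),
        ← ENNReal.ofReal_mul (digitWeight_nonneg ht n)]
      refine le_of_eq (congrArg ENNReal.ofReal ?_)
      simp only [digitWeight, c]
      field_simp

lemma lintegral_enorm_deltaIntegrand_le {t : ℝ} (ht0 : 0 < t) (ht1 : t ≤ 1) :
    ∫⁻ x, ‖deltaIntegrand t x‖ₑ ∂gaussMeasure ≤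
      ENNReal.ofReal (2 * (t * (5 + Real.log t⁻¹)) ^ 2) :=
  calc ∫⁻ x, ‖deltaIntegrand t x‖ₑ ∂gaussMeasure
      ≤ 2 * ∫⁻ x in Ioo 0 1, ‖deltaIntegrand t x‖ₑ := by
        grw [gaussMeasure_le_two_smul, lintegral_smul_measure, smul_eq_mul]
    _ ≤ 2 * (∑' k, ENNReal.ofReal (digitWeight t k)) ^ 2 := by
        grw [setLIntegral_Ioo_le_sq_tsum_of_gaussCylinder
          (setLIntegral_gaussCylinder_enorm_deltaIntegrand_le ht0.le)]
    _ ≤ ENNReal.ofReal (2 * (t * (5 + Real.log t⁻¹)) ^ 2) := by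
        have : 0 ≤ Real.log t⁻¹ := Real.log_nonneg (one_le_inv₀ ht0 |>.2 ht1)
        grw [tsum_ofReal_digitWeight_le ht0 ht1, ← ENNReal.ofReal_pow (by positivity),
          ENNReal.ofReal_mul zero_le_two, ENNReal.ofReal_ofNat]

theorem stmt_14 : ∃ C : ℝ, ∀ t ∈ Set.Ioo (0:ℝ) (1/2),
    ‖∫ x, (Complex.exp (-(Complex.I * (t : ℂ) * (⌊1 / gaussMap x⌋ : ℂ))) - 1) *
          (Complex.exp (Complex.I * (t : ℂ) * (⌊1 / x⌋ : ℂ)) - 1) ∂gaussMeasure‖ ≤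
      C * (t * Real.log t) ^ 2 := by
  refine ⟨242, fun t ⟨ht0, ht⟩ ↦ ?_⟩
  have hL : 1 / 2 ≤ Real.log t⁻¹ := by
    have := Real.log_two_gt_d9
    have : Real.log 2 ≤ Real.log t⁻¹ :=
      Real.log_le_log two_pos (by rw [le_inv_comm₀] <;> linarith)
    linarith
  have hΔ := (enorm_integral_le_lintegral_enorm _).trans
    (lintegral_enorm_deltaIntegrand_le ht0 (by linarith))
  rw [← ofReal_norm, ENNReal.ofReal_le_ofReal_iff (by positivity)] at hΔ
  calc _ ≤ 2 * (t * (5 + Real.log t⁻¹)) ^ 2 := hΔ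
    _ ≤ 2 * (t * (11 * Real.log t⁻¹)) ^ 2 := by gcongr; linarith
    _ = 242 * (t * Real.log t) ^ 2 := by rw [Real.log_inv]; ring
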